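/- arXiv:2106.02922 — 2 statements merged into one kernel-verified Lean document; each statement's English description precedes it below -/
import Mathlib

section
/- Abstract coercivity of the coupled bulk–surface bilinear form (Lemma 3.1). Under the stated setup and with the Korn-type, trace, and embedding inequalities as hypotheses, there exists a constant C > 0, depending only on μ⁻, μ⁺, μ_Γ, f⁻, f⁺ and the constants c₁,…,c₅, such that for all v⁻ ∈ X⁻, v⁺ ∈ X⁺, V ∈ X_Γ: 2μ⁻‖D⁻v⁻‖² + 2μ⁺‖D⁺v⁺‖² + 2μ_Γ‖D_Γ V‖² + f⁻‖T⁻v⁻ − J V‖² + f⁺‖T⁺v⁺ − J V‖² ≥ C (‖v⁻‖² + ‖v⁺‖² + ‖V‖²). -/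
set_option maxHeartbeats 1000000 in
/-- Abstract coercivity of the coupled bulk–surface bilinear form (Lemma 3.1).
`Xm, Xp, XΓ` play the roles of `H¹(Ω₋)³`, the subspace of `H¹(Ω₊)³` with zero
Dirichlet trace on `∂Ω`, and the tangential surface space `V_Γ`; `Hm, Hp, HΓ, Z`
play the roles of the strain-tensor `L²` spaces and `L²(Γ)³`; `Dm, Dp, DΓ` are the
symmetric gradients, `Tm, Tp` the tangentially projected traces, `J` the embedding
of `V_Γ` into `L²(Γ)³`. -/
theorem coupled_form_coercivity
    {Xm Xp XΓ Hm Hp HΓ Z : Type*}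
    [NormedAddCommGroup Xm] [NormedSpace ℝ Xm]
    [NormedAddCommGroup Xp] [NormedSpace ℝ Xp]
    [NormedAddCommGroup XΓ] [NormedSpace ℝ XΓ]
    [NormedAddCommGroup Hm] [NormedSpace ℝ Hm]
    [NormedAddCommGroup Hp] [NormedSpace ℝ Hp]
    [NormedAddCommGroup HΓ] [NormedSpace ℝ HΓ]
    [NormedAddCommGroup Z] [NormedSpace ℝ Z]
    (Dm : Xm →L[ℝ] Hm) (Dp : Xp →L[ℝ] Hp) (DΓ : XΓ →L[ℝ] HΓ)
    (Tm : Xm →L[ℝ] Z) (Tp : Xp →L[ℝ] Z) (J : XΓ →L[ℝ] Z)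
    (μm μp μΓ fm fp : ℝ)
    (hμm : 0 < μm) (hμp : 0 < μp) (hμΓ : 0 < μΓ) (hfm : 0 < fm) (hfp : 0 < fp)
    (c₁ c₂ c₃ c₄ c₅ : ℝ)
    (hc₁ : 0 < c₁) (hc₂ : 0 < c₂) (hc₃ : 0 < c₃) (hc₄ : 0 < c₄) (hc₅ : 0 < c₅)
    -- (i) Korn's inequality in Ω₊ with homogeneous Dirichlet condition on ∂Ω
    (korn_p : ∀ vp : Xp, ‖vp‖ ≤ c₁ * ‖Dp vp‖)
    -- (ii) trace inequality
    (trace_p : ∀ vp : Xp, ‖Tp vp‖ ≤ c₂ * ‖vp‖)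
    -- (iii) Korn's inequality on Γ
    (korn_Γ : ∀ V : XΓ, ‖V‖ ≤ c₃ * (‖J V‖ + ‖DΓ V‖))
    -- (iv) bound of the L²(Γ) norm by the H¹(Γ) norm
    (embed : ∀ V : XΓ, ‖J V‖ ≤ c₄ * ‖V‖)
    -- (v) Korn's inequality in Ω₋ with an interface trace term
    (korn_m : ∀ vm : Xm, ‖vm‖ ≤ c₅ * (‖Dm vm‖ + ‖Tm vm‖)) :
    ∃ C > 0, ∀ (vm : Xm) (vp : Xp) (V : XΓ),
      C * (‖vm‖ ^ 2 + ‖vp‖ ^ 2 + ‖V‖ ^ 2) ≤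
        2 * μm * ‖Dm vm‖ ^ 2 + 2 * μp * ‖Dp vp‖ ^ 2 + 2 * μΓ * ‖DΓ V‖ ^ 2
          + fm * ‖Tm vm - J V‖ ^ 2 + fp * ‖Tp vp - J V‖ ^ 2 := by
  set m : ℝ := min (2*μm) (min (2*μp) (min (2*μΓ) (min fm fp))) with hmdef
  have hm0 : 0 < m := by
    simp only [hmdef, lt_min_iff]
    refine ⟨by linarith, by linarith, by linarith, hfm, hfp⟩
  set K : ℝ := c₁^2 + 3*c₃^2*(1 + c₁^2*c₂^2) + 3*c₅^2
      + 9*c₅^2*c₄^2*c₃^2*(1 + c₁^2*c₂^2) with hKdef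
  have hK0 : 0 < K := by positivity
  -- coefficient bounds
  have kDm : 3*c₅^2 ≤ K := by
    have : (0:ℝ) ≤ c₁^2 + 3*c₃^2*(1 + c₁^2*c₂^2) + 9*c₅^2*c₄^2*c₃^2*(1 + c₁^2*c₂^2) := by positivity
    rw [hKdef]; linarith
  have kDp : c₁^2 + 3*c₃^2*(c₁^2*c₂^2) + 9*c₅^2*c₄^2*c₃^2*(c₁^2*c₂^2) ≤ K := by
    have : (0:ℝ) ≤ 3*c₃^2 + 3*c₅^2 + 9*c₅^2*c₄^2*c₃^2 := by positivity
    rw [hKdef]; ring_nf; ring_nf at this ⊢; nlinarith [this]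
  have kDΓ : 3*c₃^2 + 9*c₅^2*c₄^2*c₃^2 ≤ K := by
    have : (0:ℝ) ≤ c₁^2 + 3*c₃^2*(c₁^2*c₂^2) + 3*c₅^2 + 9*c₅^2*c₄^2*c₃^2*(c₁^2*c₂^2) := by positivity
    rw [hKdef]; nlinarith [this]
  have kTm : 3*c₅^2 ≤ K := kDm
  have kTp : 3*c₃^2 + 9*c₅^2*c₄^2*c₃^2 ≤ K := kDΓ
  refine ⟨m / K, by positivity, ?_⟩
  intro vm vp V
  have hb1 : ‖vp‖ ≤ c₁ * ‖Dp vp‖ := korn_p vp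
  have hb2 : ‖J V‖ ≤ ‖Tp vp - J V‖ + c₂ * (c₁ * ‖Dp vp‖) := by
    have h1 : ‖J V‖ - ‖Tp vp‖ ≤ ‖J V - Tp vp‖ := norm_sub_norm_le _ _
    have h2 : ‖J V - Tp vp‖ = ‖Tp vp - J V‖ := norm_sub_rev _ _
    have h3 := trace_p vp
    have h4 := mul_le_mul_of_nonneg_left hb1 hc₂.le
    linarith
  have hb3 : ‖V‖ ≤ c₃ * (‖Tp vp - J V‖ + c₁*c₂*‖Dp vp‖ + ‖DΓ V‖) := by
    have h1 := korn_Γ V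
    have h2 : c₃ * (‖J V‖ + ‖DΓ V‖) ≤ c₃ * ((‖Tp vp - J V‖ + c₂ * (c₁ * ‖Dp vp‖)) + ‖DΓ V‖) := by
      apply mul_le_mul_of_nonneg_left _ hc₃.le
      linarith
    calc ‖V‖ ≤ c₃ * (‖J V‖ + ‖DΓ V‖) := h1
      _ ≤ c₃ * ((‖Tp vp - J V‖ + c₂ * (c₁ * ‖Dp vp‖)) + ‖DΓ V‖) := h2
      _ = c₃ * (‖Tp vp - J V‖ + c₁*c₂*‖Dp vp‖ + ‖DΓ V‖) := by ring
  have hb4 : ‖Tm vm‖ ≤ ‖Tm vm - J V‖ + c₄ * ‖V‖ := by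
    have h1 : ‖Tm vm‖ - ‖J V‖ ≤ ‖Tm vm - J V‖ := norm_sub_norm_le _ _
    have h2 := embed V
    linarith
  have hb5 : ‖vm‖ ≤ c₅ * (‖Dm vm‖ + ‖Tm vm - J V‖ + c₄ * ‖V‖) := by
    have h1 := korn_m vm
    have h2 : c₅ * (‖Dm vm‖ + ‖Tm vm‖) ≤ c₅ * (‖Dm vm‖ + (‖Tm vm - J V‖ + c₄ * ‖V‖)) := by
      apply mul_le_mul_of_nonneg_left _ hc₅.le
      linarith
    calc ‖vm‖ ≤ c₅ * (‖Dm vm‖ + ‖Tm vm‖) := h1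
      _ ≤ c₅ * (‖Dm vm‖ + (‖Tm vm - J V‖ + c₄ * ‖V‖)) := h2
      _ = c₅ * (‖Dm vm‖ + ‖Tm vm - J V‖ + c₄ * ‖V‖) := by ring
  -- squared bounds
  have sq1 : ‖vp‖^2 ≤ c₁^2 * ‖Dp vp‖^2 := by
    have := pow_le_pow_left₀ (norm_nonneg vp) hb1 2
    calc ‖vp‖^2 ≤ (c₁ * ‖Dp vp‖)^2 := this
      _ = c₁^2 * ‖Dp vp‖^2 := by ring
  have sq3 : ‖V‖^2 ≤ 3*c₃^2*(‖Tp vp - J V‖^2 + c₁^2*c₂^2*‖Dp vp‖^2 + ‖DΓ V‖^2) := by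
    have h := pow_le_pow_left₀ (norm_nonneg V) hb3 2
    nlinarith [mul_nonneg (sq_nonneg c₃) (sq_nonneg (‖Tp vp - J V‖ - c₁*c₂*‖Dp vp‖)),
      mul_nonneg (sq_nonneg c₃) (sq_nonneg (‖Tp vp - J V‖ - ‖DΓ V‖)),
      mul_nonneg (sq_nonneg c₃) (sq_nonneg (c₁*c₂*‖Dp vp‖ - ‖DΓ V‖))]
  have sq4 : ‖vm‖^2 ≤ 3*c₅^2*(‖Dm vm‖^2 + ‖Tm vm - J V‖^2 + c₄^2*‖V‖^2) := by
    have h := pow_le_pow_left₀ (norm_nonneg vm) hb5 2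
    nlinarith [mul_nonneg (sq_nonneg c₅) (sq_nonneg (‖Dm vm‖ - ‖Tm vm - J V‖)),
      mul_nonneg (sq_nonneg c₅) (sq_nonneg (‖Dm vm‖ - c₄*‖V‖)),
      mul_nonneg (sq_nonneg c₅) (sq_nonneg (‖Tm vm - J V‖ - c₄*‖V‖))]
  have sq5 : ‖vm‖^2 ≤ 3*c₅^2*(‖Dm vm‖^2 + ‖Tm vm - J V‖^2)
      + 9*c₅^2*c₄^2*c₃^2*(‖Tp vp - J V‖^2 + c₁^2*c₂^2*‖Dp vp‖^2 + ‖DΓ V‖^2) := by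
    have h := mul_le_mul_of_nonneg_left sq3 (by positivity : (0:ℝ) ≤ 3*c₅^2*c₄^2)
    nlinarith [sq4, h]
  -- combine
  have hDm := mul_le_mul_of_nonneg_right kDm (sq_nonneg ‖Dm vm‖)
  have hDp := mul_le_mul_of_nonneg_right kDp (sq_nonneg ‖Dp vp‖)
  have hDΓ := mul_le_mul_of_nonneg_right kDΓ (sq_nonneg ‖DΓ V‖)
  have hTm := mul_le_mul_of_nonneg_right kTm (sq_nonneg ‖Tm vm - J V‖)
  have hTp := mul_le_mul_of_nonneg_right kTp (sq_nonneg ‖Tp vp - J V‖)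
  have hS : ‖vm‖^2 + ‖vp‖^2 + ‖V‖^2 ≤
      K * (‖Dm vm‖^2 + ‖Dp vp‖^2 + ‖DΓ V‖^2 + ‖Tm vm - J V‖^2 + ‖Tp vp - J V‖^2) := by
    linarith [sq1, sq3, sq5, hDm, hDp, hDΓ, hTm, hTp]
  have h1 : m ≤ 2*μm := min_le_left _ _
  have h2 : m ≤ 2*μp := le_trans (min_le_right _ _) (min_le_left _ _)
  have h3 : m ≤ 2*μΓ := le_trans (min_le_right _ _) (le_trans (min_le_right _ _) (min_le_left _ _))
  have h4 : m ≤ fm := le_trans (min_le_right _ _) (le_trans (min_le_right _ _)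
    (le_trans (min_le_right _ _) (min_le_left _ _)))
  have h5 : m ≤ fp := le_trans (min_le_right _ _) (le_trans (min_le_right _ _)
    (le_trans (min_le_right _ _) (min_le_right _ _)))
  have hmin : m * (‖Dm vm‖^2 + ‖Dp vp‖^2 + ‖DΓ V‖^2 + ‖Tm vm - J V‖^2 + ‖Tp vp - J V‖^2) ≤
      2 * μm * ‖Dm vm‖ ^ 2 + 2 * μp * ‖Dp vp‖ ^ 2 + 2 * μΓ * ‖DΓ V‖ ^ 2
        + fm * ‖Tm vm - J V‖ ^ 2 + fp * ‖Tp vp - J V‖ ^ 2 := by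
    linarith [mul_le_mul_of_nonneg_right h1 (sq_nonneg ‖Dm vm‖),
      mul_le_mul_of_nonneg_right h2 (sq_nonneg ‖Dp vp‖),
      mul_le_mul_of_nonneg_right h3 (sq_nonneg ‖DΓ V‖),
      mul_le_mul_of_nonneg_right h4 (sq_nonneg ‖Tm vm - J V‖),
      mul_le_mul_of_nonneg_right h5 (sq_nonneg ‖Tp vp - J V‖)]
  have hC : m / K * (‖vm‖ ^ 2 + ‖vp‖ ^ 2 + ‖V‖ ^ 2) ≤
      m * (‖Dm vm‖^2 + ‖Dp vp‖^2 + ‖DΓ V‖^2 + ‖Tm vm - J V‖^2 + ‖Tp vp - J V‖^2) := by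
    rw [div_mul_eq_mul_div, div_le_iff₀ hK0]
    calc m * (‖vm‖ ^ 2 + ‖vp‖ ^ 2 + ‖V‖ ^ 2)
        ≤ m * (K * (‖Dm vm‖^2 + ‖Dp vp‖^2 + ‖DΓ V‖^2 + ‖Tm vm - J V‖^2 + ‖Tp vp - J V‖^2)) :=
          mul_le_mul_of_nonneg_left hS hm0.le
      _ = m * (‖Dm vm‖^2 + ‖Dp vp‖^2 + ‖DΓ V‖^2 + ‖Tm vm - J V‖^2 + ‖Tp vp - J V‖^2) * K := by ring
  linarith
end

section
/- Abstract absorption lemma underlying the first inf-sup condition (3.29) of Lemma 3.2. Let X be a real normed space and Y a real inner product space which is the orthogonal direct sum of two subspaces Y₀ and Y₁ (every y ∈ Y decomposes uniquely as y = y₀ + y₁ with y₀ ∈ Y₀, y₁ ∈ Y₁ and ⟨y₀, y₁⟩ = 0). Let F : X × Y → ℝ be a bilinear form and M, c₀, c₁ > 0 constants such that: (i) |F(x,y)| ≤ M‖x‖‖y‖ for all x ∈ X, y ∈ Y; (ii) for every y₀ ∈ Y₀ there exists x₀ ∈ X with ‖x₀‖ ≤ c₀‖y₀‖, F(x₀,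 y₀) ≥ ‖y₀‖², and F(x₀, y₁) = 0 for all y₁ ∈ Y₁; (iii) for every y₁ ∈ Y₁ there exists x₁ ∈ X with ‖x₁‖ ≤ c₁‖y₁‖ and F(x₁, y₁) ≥ ‖y₁‖². Then there exists γ > 0, depending only on M, c₀, c₁, such that for every nonzero y ∈ Y, sup over nonzero x ∈ X of F(x,y)/‖x‖ is at least γ‖y‖. -/
open RealInnerProductSpace

/-!
Decompose `y = y₀ + y₁` and test with `x = x₀ + β x₁`, where `x₀, x₁` are the test elements
of `y₀, y₁`. Since `x₀` annihilates `Y₁`, the only cross term is `β F(x₁, y₀)`, bounded by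
`β M c₁ ‖y₀‖ ‖y₁‖`; for `β = (M c₁)⁻²` Young's inequality absorbs it into half of `‖y₀‖²` and half
of `β ‖y₁‖²`. Hence `F(x, y) ≳ ‖y‖²` while `‖x‖ ≲ ‖y‖`.
-/

section InfSup

variable {X : Type*} [NormedAddCommGroup X]

lemma bddAbove_range_div_norm {f : X → ℝ} {K : ℝ} (hf : ∀ x, f x ≤ K * ‖x‖) :
    BddAbove (Set.range fun x : {x : X // x ≠ 0} => f x.1 / ‖x.1‖) := by
  refine ⟨K, ?_⟩
  rintro _ ⟨⟨x, hx⟩, rfl⟩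
  exact (div_le_iff₀ (norm_pos_iff.mpr hx)).mpr (hf x)

lemma le_ciSup_div_norm_of_le {f : X → ℝ} {K m C r : ℝ} (hf : ∀ x, f x ≤ K * ‖x‖)
    (hm : 0 < m) (hC : 0 < C) (hr : 0 < r) {x : X} (hx : ‖x‖ ≤ C * r)
    (hfx : m * r ^ 2 ≤ f x) :
    m / C * r ≤ ⨆ x : {x : X // x ≠ 0}, f x.1 / ‖x.1‖ := by
  have hx0 : x ≠ 0 := by
    rintro rfl
    have := hf 0
    rw [norm_zero, mul_zero] at this
    nlinarith [mul_pos hm (pow_pos hr 2)]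
  refine le_trans ?_ (le_ciSup (bddAbove_range_div_norm hf) ⟨x, hx0⟩)
  rw [le_div_iff₀ (norm_pos_iff.mpr hx0)]
  calc m / C * r * ‖x‖ ≤ m / C * r * (C * r) := by gcongr
    _ = m * r ^ 2 := by field_simp
    _ ≤ f x := hfx

end InfSup

lemma norm_add_smul_le_of_le {X : Type*} [NormedAddCommGroup X] [NormedSpace ℝ X]
    {x₀ x₁ : X} {c₀ c₁ β r : ℝ} (hβ : 0 ≤ β) (hx₀ : ‖x₀‖ ≤ c₀ * r) (hx₁ : ‖x₁‖ ≤ c₁ * r) :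
    ‖x₀ + β • x₁‖ ≤ (c₀ + β * c₁) * r :=
  calc ‖x₀ + β • x₁‖ ≤ ‖x₀‖ + β * ‖x₁‖ := by
        simpa only [norm_smul, Real.norm_of_nonneg hβ] using norm_add_le x₀ (β • x₁)
    _ ≤ c₀ * r + β * (c₁ * r) := by gcongr
    _ = (c₀ + β * c₁) * r := by ring

lemma absorption_estimate {a b p q r K β : ℝ} (hβ : 0 ≤ β) (hβK : β * K ^ 2 ≤ 1)
    (hp : a ^ 2 ≤ p) (hr : b ^ 2 ≤ r) (hq : |q| ≤ K * a * b) :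
    a ^ 2 / 2 + β * b ^ 2 / 2 ≤ p + β * q + β * r := by
  have hyoung : β * (K * a * b) ≤ a ^ 2 / 2 + β * (β * K ^ 2) * b ^ 2 / 2 := by
    nlinarith [sq_nonneg (a - β * K * b)]
  have hβb : β * (β * K ^ 2) * b ^ 2 ≤ β * b ^ 2 := by
    nlinarith [mul_nonneg hβ (sq_nonneg b)]
  have hβq : -(β * (K * a * b)) ≤ β * q := by
    nlinarith [neg_le_of_abs_le hq]
  nlinarith

lemma absorption_lower_bound {X Y : Type*} [NormedAddCommGroup X] [NormedSpace ℝ X]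
    [NormedAddCommGroup Y] [NormedSpace ℝ Y] (F : X →ₗ[ℝ] Y →ₗ[ℝ] ℝ) {M c₁ β : ℝ}
    (hbound : ∀ (x : X) (y : Y), |F x y| ≤ M * ‖x‖ * ‖y‖) (hM : 0 ≤ M)
    (hβ : 0 ≤ β) (hβK : β * (M * c₁) ^ 2 ≤ 1)
    {x₀ x₁ : X} {y₀ y₁ : Y} (hFx₀ : ‖y₀‖ ^ 2 ≤ F x₀ y₀) (hann : F x₀ y₁ = 0)
    (hx₁ : ‖x₁‖ ≤ c₁ * ‖y₁‖) (hFx₁ : ‖y₁‖ ^ 2 ≤ F x₁ y₁) :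
    ‖y₀‖ ^ 2 / 2 + β * ‖y₁‖ ^ 2 / 2 ≤ F (x₀ + β • x₁) (y₀ + y₁) := by
  have hcross : |F x₁ y₀| ≤ M * c₁ * ‖y₀‖ * ‖y₁‖ :=
    calc |F x₁ y₀| ≤ M * ‖x₁‖ * ‖y₀‖ := hbound x₁ y₀
      _ ≤ M * (c₁ * ‖y₁‖) * ‖y₀‖ := by gcongr
      _ = M * c₁ * ‖y₀‖ * ‖y₁‖ := by ring
  have hexpand : F (x₀ + β • x₁) (y₀ + y₁) = F x₀ y₀ + β * F x₁ y₀ + β * F x₁ y₁ := by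
    simp only [map_add, map_smul, LinearMap.add_apply, LinearMap.smul_apply, smul_eq_mul, hann]
    ring
  rw [hexpand]
  exact absorption_estimate hβ hβK hFx₀ hFx₁ hcross

/-- Abstract absorption lemma underlying the first inf-sup condition (3.29) of
Lemma 3.2: `Y` is the orthogonal direct sum of subspaces `Y₀` and `Y₁`, `F` is a
bounded bilinear form which is surjectively controlled on `Y₀` (with test
elements annihilating `Y₁`) and on `Y₁`; then an inf-sup bound holds on all of
`Y` with a constant `γ` depending only on `M, c₀, c₁`. -/
theorem absorption_inf_sup
    {X Y : Type*} [NormedAddCommGroup X] [NormedSpace ℝ X]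
    [NormedAddCommGroup Y] [InnerProductSpace ℝ Y]
    (Y₀ Y₁ : Submodule ℝ Y)
    (horth : ∀ y₀ ∈ Y₀, ∀ y₁ ∈ Y₁, ⟪y₀, y₁⟫ = 0)
    (hdecomp : ∀ y : Y, ∃! z : Y × Y, z.1 ∈ Y₀ ∧ z.2 ∈ Y₁ ∧ y = z.1 + z.2)
    (F : X →ₗ[ℝ] Y →ₗ[ℝ] ℝ)
    (M c₀ c₁ : ℝ) (hM : 0 < M) (hc₀ : 0 < c₀) (hc₁ : 0 < c₁)
    -- (i) continuity of the bilinear form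
    (hbound : ∀ (x : X) (y : Y), |F x y| ≤ M * ‖x‖ * ‖y‖)
    -- (ii) control on Y₀ by test elements annihilating Y₁
    (h₀ : ∀ y₀ ∈ Y₀, ∃ x₀ : X, ‖x₀‖ ≤ c₀ * ‖y₀‖ ∧ ‖y₀‖ ^ 2 ≤ F x₀ y₀ ∧
        ∀ y₁ ∈ Y₁, F x₀ y₁ = 0)
    -- (iii) control on Y₁
    (h₁ : ∀ y₁ ∈ Y₁, ∃ x₁ : X, ‖x₁‖ ≤ c₁ * ‖y₁‖ ∧ ‖y₁‖ ^ 2 ≤ F x₁ y₁) :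
    ∃ γ > 0, ∀ y : Y, y ≠ 0 →
      γ * ‖y‖ ≤ ⨆ x : {x : X // x ≠ 0}, F x.1 y / ‖x.1‖ := by
  set β : ℝ := 1 / (M * c₁) ^ 2
  have hβ : 0 < β := by positivity
  have hβK : β * (M * c₁) ^ 2 = 1 := one_div_mul_cancel (by positivity)
  refine ⟨min (1 / 2) (β / 2) / (c₀ + β * c₁), by positivity, fun y hy => ?_⟩
  obtain ⟨⟨y₀, y₁⟩, ⟨hy₀, hy₁, rfl⟩, -⟩ := hdecomp y
  dsimp only at hy hy₀ hy₁ ⊢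
  have hpyth : ‖y₀ + y₁‖ ^ 2 = ‖y₀‖ ^ 2 + ‖y₁‖ ^ 2 := by
    simpa only [sq] using norm_add_sq_eq_norm_sq_add_norm_sq_real (horth y₀ hy₀ y₁ hy₁)
  obtain ⟨x₀, hx₀, hFx₀, hann⟩ := h₀ y₀ hy₀
  obtain ⟨x₁, hx₁, hFx₁⟩ := h₁ y₁ hy₁
  refine le_ciSup_div_norm_of_le (f := fun x => F x (y₀ + y₁)) (K := M * ‖y₀ + y₁‖)
    (x := x₀ + β • x₁) (fun x => by linarith [le_of_abs_le (hbound x (y₀ + y₁))])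
    (by positivity) (by positivity) (norm_pos_iff.mpr hy) ?_ ?_
  · have hy₀le : ‖y₀‖ ≤ ‖y₀ + y₁‖ := by
      rw [← pow_le_pow_iff_left₀ (norm_nonneg _) (norm_nonneg _) two_ne_zero, hpyth]
      exact le_add_of_nonneg_right (sq_nonneg _)
    have hy₁le : ‖y₁‖ ≤ ‖y₀ + y₁‖ := by
      rw [← pow_le_pow_iff_left₀ (norm_nonneg _) (norm_nonneg _) two_ne_zero, hpyth]
      exact le_add_of_nonneg_left (sq_nonneg _)
    exact norm_add_smul_le_of_le hβ.le (hx₀.trans (by gcongr)) (hx₁.trans (by gcongr))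
  · calc min (1 / 2) (β / 2) * ‖y₀ + y₁‖ ^ 2 ≤ ‖y₀‖ ^ 2 / 2 + β * ‖y₁‖ ^ 2 / 2 := by
          rw [hpyth]
          nlinarith [min_le_left (1 / 2 : ℝ) (β / 2), min_le_right (1 / 2 : ℝ) (β / 2),
            sq_nonneg ‖y₀‖, sq_nonneg ‖y₁‖]
      _ ≤ F (x₀ + β • x₁) (y₀ + y₁) :=
          absorption_lower_bound F hbound hM.le hβ.le hβK.le hFx₀ (hann y₁ hy₁) hx₁ hFx₁
end
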